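/- Let c be a coloring of a finite simple graph G and let u, v be vertices with c(u) ≠ c(v). The swap of u and v is improving under the variety-seeking utility U_τ if and only if all of the following hold: (i) u and v are not adjacent; (ii) U_τ(c,u) = U_τ(c,v); (iii) c(u) ∈ T_c(u) \ T_c(v) and c(v) ∈ T_c(v) \ T_c(u). -/

import Mathlib

open SimpleGraph Finset

/-- The coloring obtained from `c` by swapping the colors (agents) at `u` and `v`. -/
def swapColoring {V : Type*} [DecidableEq V] {t : ℕ} (c : V → Fin t) (u v : V) : V → Fin t :=
  fun w => if w = u then c v else if w = v then c u else c w

/-- The binary utility `U_b`: 1 if some neighbor has a different type, 0 otherwise. -/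
def Ub {V : Type*} [Fintype V] (G : SimpleGraph V) [DecidableRel G.Adj]
    {t : ℕ} (c : V → Fin t) (v : V) : ℕ :=
  if ∃ w ∈ G.neighborFinset v, c w ≠ c v then 1 else 0

/-- The difference-seeking utility `U_#`: the number of neighbors of a different type. -/
def Usharp {V : Type*} [Fintype V] (G : SimpleGraph V) [DecidableRel G.Adj]
    {t : ℕ} (c : V → Fin t) (v : V) : ℕ :=
  ((G.neighborFinset v).filter fun w => c w ≠ c v).card

/-- `T_c(v)`: the set of types present in the neighborhood of `v`. -/
def typesIn {V : Type*} [Fintype V] (G : SimpleGraph V) [DecidableRel G.Adj]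
    {t : ℕ} (c : V → Fin t) (v : V) : Finset (Fin t) :=
  (G.neighborFinset v).image c

/-- The variety-seeking utility `U_τ`: the number of types other than `c v` in the
neighborhood of `v`. -/
def Utau {V : Type*} [Fintype V] (G : SimpleGraph V) [DecidableRel G.Adj]
    {t : ℕ} (c : V → Fin t) (v : V) : ℕ :=
  ((typesIn G c v).erase (c v)).card

/-- The swap of `u` and `v` is improving under utility `U`. -/
def ImprovingSwap {V : Type*} [DecidableEq V] {t : ℕ}
    (U : (V → Fin t) → V → ℕ) (c : V → Fin t) (u v : V) : Prop :=
  U c u < U (swapColoring c u v) v ∧ U c v < U (swapColoring c u v) u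

/-- `c` is an equilibrium under the utility `U`: no improving swap exists. -/
def Equilibrium {V : Type*} [DecidableEq V] {t : ℕ}
    (U : (V → Fin t) → V → ℕ) (c : V → Fin t) : Prop :=
  ∀ u v : V, c u ≠ c v → ¬ ImprovingSwap U c u v

/-- The number of monochromatic edges of `c`. -/
def monoCount {V : Type*} [Fintype V] [DecidableEq V] (G : SimpleGraph V) [DecidableRel G.Adj]
    {t : ℕ} (c : V → Fin t) : ℕ :=
  (G.edgeFinset.filter fun e => (e.map c).IsDiag).card

/-- The number of colorful edges of `c`. -/
def ceCount {V : Type*} [Fintype V] [DecidableEq V] (G : SimpleGraph V) [DecidableRel G.Adj]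
    {t : ℕ} (c : V → Fin t) : ℕ :=
  (G.edgeFinset.filter fun e => ¬ (e.map c).IsDiag).card

/-- The cycle graph on `ZMod n`: `i` adjacent to `i + 1` and `i - 1`. -/
def cycleZMod (n : ℕ) : SimpleGraph (ZMod n) := SimpleGraph.circulantGraph {1}

instance (n : ℕ) : DecidableRel (cycleZMod n).Adj := fun a b =>
  decidable_of_iff (a ≠ b ∧ (a - b = 1 ∨ b - a = 1)) (by simp [cycleZMod])

instance {α β : Type*} (G : SimpleGraph α) (H : SimpleGraph β)
    [DecidableRel G.Adj] [DecidableRel H.Adj] [DecidableEq α] [DecidableEq β] :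
    DecidableRel (G □ H).Adj := fun x y =>
  decidable_of_iff (G.Adj x.1 y.1 ∧ x.2 = y.2 ∨ H.Adj x.2 y.2 ∧ x.1 = y.1)
    (SimpleGraph.boxProd_adj).symm

/-!
If `u` and `v` are adjacent, the swap cannot raise the utility of either of them, so it is never
improving. If they are not, the swap leaves both neighbourhoods' type sets `A = T_c(u)`,
`B = T_c(v)` unchanged, and being improving becomes the purely finset statement
`#(A \ {a}) < #(B \ {a})` and `#(B \ {b}) < #(A \ {b})` for `a = c u`, `b = c v`.
-/

namespace Finset

variable {α : Type*} [DecidableEq α]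

theorem card_erase_lt_card_erase_and_iff (A B : Finset α) (a b : α) :
    (#(A.erase a) < #(B.erase a) ∧ #(B.erase b) < #(A.erase b)) ↔
      #(A.erase a) = #(B.erase b) ∧ (a ∈ A ∧ a ∉ B) ∧ (b ∈ B ∧ b ∉ A) := by
  -- Adding the two strict inequalities forces `a ∈ A \ B` and `b ∈ B \ A`; then both say `#A = #B`.
  grind [card_erase_eq_ite, card_pos]

theorem card_erase_insert_le_card_erase {B : Finset α} {a : α} (b : α) (ha : a ∈ B) :
    #((insert b B).erase a) ≤ #(B.erase b) := by
  by_cases hb : b ∈ B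
  · rw [insert_eq_of_mem hb, card_erase_of_mem ha, card_erase_of_mem hb]
  · rw [erase_eq_of_notMem hb, card_erase_of_mem (mem_insert_of_mem ha), card_insert_of_notMem hb]
    omega

end Finset

section Swap

variable {V : Type*} [DecidableEq V] {t : ℕ}

theorem swapColoring_comm (c : V → Fin t) (u v : V) :
    swapColoring c u v = swapColoring c v u := by
  funext w
  unfold swapColoring
  split_ifs <;> simp_all

@[simp]
theorem swapColoring_apply_left (c : V → Fin t) (u v : V) : swapColoring c u v u = c v := by
  simp [swapColoring]

@[simp]
theorem swapColoring_apply_right (c : V → Fin t) (u v : V) : swapColoring c u v v = c u := by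
  rw [swapColoring_comm, swapColoring_apply_left]

theorem swapColoring_apply_of_ne {c : V → Fin t} {u v w : V} (hu : w ≠ u) (hv : w ≠ v) :
    swapColoring c u v w = c w := by
  simp [swapColoring, hu, hv]

variable [Fintype V] (G : SimpleGraph V) [DecidableRel G.Adj]

theorem typesIn_swapColoring_of_not_adj {c : V → Fin t} {u v w : V}
    (hu : ¬ G.Adj w u) (hv : ¬ G.Adj w v) :
    typesIn G (swapColoring c u v) w = typesIn G c w := by
  refine image_congr fun x hx => swapColoring_apply_of_ne ?_ ?_
  all_goals rintro rfl; simp_all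

theorem typesIn_swapColoring_subset {c : V → Fin t} {u v w : V} (hv : ¬ G.Adj w v) :
    typesIn G (swapColoring c u v) w ⊆ insert (c v) (typesIn G c w) := by
  intro x hx
  obtain ⟨y, hy, rfl⟩ := mem_image.1 hx
  by_cases hyu : y = u
  · simp [hyu]
  · have hyv : y ≠ v := by rintro rfl; simp_all
    rw [swapColoring_apply_of_ne hyu hyv]
    exact mem_insert_of_mem (mem_image_of_mem c hy)

/-- Across an edge, `v` stops counting `c u`, its new own type, which it saw at `u`, and can
newly count at most `c v`. -/
theorem Utau_swapColoring_right_le {c : V → Fin t} {u v : V} (h : G.Adj u v) :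
    Utau G (swapColoring c u v) v ≤ Utau G c v := by
  have hu : c u ∈ typesIn G c v := mem_image_of_mem c ((G.mem_neighborFinset v u).2 h.symm)
  unfold Utau
  rw [swapColoring_apply_right]
  calc #((typesIn G (swapColoring c u v) v).erase (c u))
      ≤ #((insert (c v) (typesIn G c v)).erase (c u)) :=
        card_le_card (erase_subset_erase _ (typesIn_swapColoring_subset G (G.irrefl)))
    _ ≤ #((typesIn G c v).erase (c v)) := card_erase_insert_le_card_erase _ hu

theorem Utau_swapColoring_left_le {c : V → Fin t} {u v : V} (h : G.Adj u v) :
    Utau G (swapColoring c u v) u ≤ Utau G c u := by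
  rw [swapColoring_comm]
  exact Utau_swapColoring_right_le G h.symm

theorem Utau_swapColoring_right_of_not_adj {c : V → Fin t} {u v : V} (h : ¬ G.Adj u v) :
    Utau G (swapColoring c u v) v = #((typesIn G c v).erase (c u)) := by
  rw [Utau, swapColoring_apply_right,
    typesIn_swapColoring_of_not_adj G (fun h' => h h'.symm) G.irrefl]

theorem Utau_swapColoring_left_of_not_adj {c : V → Fin t} {u v : V} (h : ¬ G.Adj u v) :
    Utau G (swapColoring c u v) u = #((typesIn G c u).erase (c v)) := by
  rw [swapColoring_comm]
  exact Utau_swapColoring_right_of_not_adj G (fun h' => h h'.symm)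

end Swap

theorem stmt4_general {V : Type*} [Fintype V] [DecidableEq V] (G : SimpleGraph V) [DecidableRel G.Adj]
    {t : ℕ} (c : V → Fin t) (u v : V) :
    ImprovingSwap (Utau G) c u v ↔
      ¬ G.Adj u v ∧ Utau G c u = Utau G c v ∧
        (c u ∈ typesIn G c u ∧ c u ∉ typesIn G c v) ∧
        (c v ∈ typesIn G c v ∧ c v ∉ typesIn G c u) := by
  by_cases hadj : G.Adj u v
  · simp only [hadj, not_true_eq_false, false_and, iff_false]
    rintro ⟨hv, hu⟩
    have := Utau_swapColoring_right_le G (c := c) hadj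
    have := Utau_swapColoring_left_le G (c := c) hadj
    omega
  · rw [ImprovingSwap, Utau_swapColoring_right_of_not_adj G hadj,
      Utau_swapColoring_left_of_not_adj G hadj]
    simp only [hadj, not_false_eq_true, true_and]
    exact Finset.card_erase_lt_card_erase_and_iff _ _ (c u) (c v)

theorem stmt4 {V : Type*} [Fintype V] [DecidableEq V] (G : SimpleGraph V) [DecidableRel G.Adj]
    {t : ℕ} (ht : 2 ≤ t) (c : V → Fin t) (u v : V) (huv : c u ≠ c v) :
    ImprovingSwap (Utau G) c u v ↔
      ¬ G.Adj u v ∧ Utau G c u = Utau G c v ∧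
        (c u ∈ typesIn G c u ∧ c u ∉ typesIn G c v) ∧
        (c v ∈ typesIn G c v ∧ c v ∉ typesIn G c u) :=
  stmt4_general G c u v
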